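/- arXiv:2411.19462 — 3 statements merged into one kernel-verified Lean document; each statement's English description precedes it below -/
import Mathlib

section
/- Let G and G' be Pusher-to-move game states of a chip game with N columns, K chips per column, and winning threshold Γ. If G ≥ G', then: if Pusher has a winning strategy from G', then Pusher has a winning strategy from G; equivalently, if G is a losing state for Pusher, then so is G'. -/
/-- The board after Pusher pushes the set `S` of chips: each chip of `S` moves up one row
(`⊥` represents a chip that has been removed from the board). -/
def pushOnly {N K : ℕ} (pos : Fin N → Fin K → WithBot ℕ) (S : Finset (Fin N × Fin K)) :
    Fin N → Fin K → WithBot ℕ :=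
  fun i j => if (i, j) ∈ S then (pos i j).map (· + 1) else pos i j

/-- The board after Remover removes all chips of `S` lying in column `col`. -/
def removeCol {N K : ℕ} (pos : Fin N → Fin K → WithBot ℕ) (S : Finset (Fin N × Fin K))
    (col : Fin N) : Fin N → Fin K → WithBot ℕ :=
  fun i j => if i = col ∧ (i, j) ∈ S then ⊥ else pos i j

/-- The board at the end of a round in which Pusher pushes the chip set `S` and Remover
then removes the chips of `S` lying in column `col`. -/
def pushChips {N K : ℕ} (pos : Fin N → Fin K → WithBot ℕ) (S : Finset (Fin N × Fin K))
    (col : Fin N) : Fin N → Fin K → WithBot ℕ :=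
  removeCol (pushOnly pos S) S col

/-- `PusherWins k pos` : from the Pusher-to-move board `pos` (with `pos i j` the row of the
`j`-th chip of column `i`, `⊥` meaning removed), Pusher has a winning strategy in the chip game
with winning threshold `k`: Pusher can force that at the end of some round a chip occupies
row `k` (or above). -/
inductive PusherWins (k : ℕ) {N K : ℕ} : (Fin N → Fin K → WithBot ℕ) → Prop
  | win (pos : Fin N → Fin K → WithBot ℕ) (i : Fin N) (j : Fin K)
      (h : (k : WithBot ℕ) ≤ pos i j) : PusherWins k pos
  | step (pos : Fin N → Fin K → WithBot ℕ) (S : Finset (Fin N × Fin K))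
      (hne : S.Nonempty) (hon : ∀ c ∈ S, pos c.1 c.2 ≠ ⊥)
      (h : ∀ col : Fin N, PusherWins k (pushChips pos S col)) : PusherWins k pos

/-- `RemoverWinsIn k fuel pos` : from the Pusher-to-move board `pos`, Remover can guarantee
that all chips are removed within `fuel` further rounds, and that no chip ever occupies
row `k` at the end of a round. -/
def RemoverWinsIn (k : ℕ) {N K : ℕ} : ℕ → (Fin N → Fin K → WithBot ℕ) → Prop
  | 0, pos => ∀ (i : Fin N) (j : Fin K), pos i j = ⊥
  | fuel + 1, pos =>
      (∀ (i : Fin N) (j : Fin K), ¬ (k : WithBot ℕ) ≤ pos i j) ∧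
      ∀ S : Finset (Fin N × Fin K), S.Nonempty → (∀ c ∈ S, pos c.1 c.2 ≠ ⊥) →
        ∃ col : Fin N, (∀ (i : Fin N) (j : Fin K), pushChips pos S col i j = ⊥) ∨
          RemoverWinsIn k fuel (pushChips pos S col)

/-- `RemoverWins k pos` : Remover has a winning strategy from the Pusher-to-move board `pos`. -/
def RemoverWins (k : ℕ) {N K : ℕ} (pos : Fin N → Fin K → WithBot ℕ) : Prop :=
  ∃ fuel, RemoverWinsIn k fuel pos

/-- `ColGE C C'` : the column state `C` dominates `C'`, i.e. when the rows of the chips of each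
column are listed in nonincreasing order, each row of `C` is at least the corresponding row of
`C'` (equivalently, some matching of the chips of `C` to those of `C'` is row-dominating;
`⊥`, a removed chip, counts as row `-1`, below every row). -/
def ColGE {K : ℕ} (C C' : Fin K → WithBot ℕ) : Prop :=
  ∃ σ : Equiv.Perm (Fin K), ∀ j, C' j ≤ C (σ j)

/-- `BoardGE B B'` : the board `B` dominates `B'`, i.e. there is a permutation `π` of the
columns such that each column of `B` dominates the corresponding column of `B'`. -/
def BoardGE {N K : ℕ} (B B' : Fin N → Fin K → WithBot ℕ) : Prop :=
  ∃ π : Equiv.Perm (Fin N), ∀ i, ColGE (B i) (B' (π i))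

lemma mapSucc_mono {x y : WithBot ℕ} (h : x ≤ y) :
    x.map (· + 1) ≤ y.map (· + 1) := by
  cases x with
  | bot => simp
  | coe a =>
    cases y with
    | bot => simp at h
    | coe b =>
      have : a ≤ b := by exact_mod_cast h
      simp only [WithBot.map_coe, WithBot.coe_le_coe]
      omega

section Transport

variable {N K : ℕ} (G G' : Fin N → Fin K → WithBot ℕ)
  (π : Equiv.Perm (Fin N)) (σ : Fin N → Equiv.Perm (Fin K))

/-- The transported push set. -/
def transpS (S' : Finset (Fin N × Fin K)) : Finset (Fin N × Fin K) :=
  S'.image (fun p => (π.symm p.1, (σ (π.symm p.1)) p.2))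

lemma mem_transpS (S' : Finset (Fin N × Fin K)) (i : Fin N) (j : Fin K) :
    (i, (σ i) j) ∈ transpS π σ S' ↔ (π i, j) ∈ S' := by
  simp only [transpS, Finset.mem_image, Prod.ext_iff]
  constructor
  · rintro ⟨⟨a, b⟩, hab, h1, h2⟩
    simp only at h1 h2
    have ha : a = π i := by
      have := h1; rw [Equiv.symm_apply_eq] at this; rw [this]
    subst ha
    rw [h1] at h2
    have : b = j := (σ i).injective h2
    rwa [this] at hab
  · intro hj
    exact ⟨(π i, j), hj, by simp, by simp⟩

lemma key_le (hdom : ∀ i j, G' (π i) j ≤ G i (σ i j))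
    (S' : Finset (Fin N × Fin K)) (col : Fin N) (i : Fin N) (j : Fin K) :
    pushChips G' S' (π col) (π i) j ≤ pushChips G (transpS π σ S') col i (σ i j) := by
  have hmem := mem_transpS π σ S' i j
  have hcol : π i = π col ↔ i = col := π.injective.eq_iff
  simp only [pushChips, removeCol, pushOnly, hmem, hcol]
  by_cases hS : (π i, j) ∈ S'
  · by_cases hc : i = col
    · subst hc; simp [hS]
    · simp [hS, hc, mapSucc_mono (hdom i j)]
  · by_cases hc : i = col
    · subst hc; simp [hS, hdom i j]
    · simp [hS, hc, hdom i j]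

lemma pusher_transport {Γ : ℕ} {G' : Fin N → Fin K → WithBot ℕ}
    (hw : PusherWins Γ G') :
    ∀ (G : Fin N → Fin K → WithBot ℕ) (π : Equiv.Perm (Fin N))
      (σ : Fin N → Equiv.Perm (Fin K)),
      (∀ i j, G' (π i) j ≤ G i (σ i j)) → PusherWins Γ G := by
  induction hw with
  | win pos i j hij =>
    intro G π σ hdom
    have : (Γ : WithBot ℕ) ≤ G (π.symm i) (σ (π.symm i) j) := by
      refine le_trans ?_ (hdom (π.symm i) j)
      simpa using hij
    exact PusherWins.win G _ _ this
  | step pos S' hne hon h ih =>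
    intro G π σ hdom
    refine PusherWins.step G (transpS π σ S') ?_ ?_ ?_
    · obtain ⟨⟨a, b⟩, hab⟩ := hne
      exact ⟨_, Finset.mem_image_of_mem _ hab⟩
    · rintro ⟨i, m⟩ hm
      have : (i, (σ i) ((σ i).symm m)) ∈ transpS π σ S' := by simpa using hm
      rw [mem_transpS] at this
      have h1 := hon _ this
      have h2 := hdom i ((σ i).symm m)
      simp only [Equiv.apply_symm_apply] at h2
      intro hb
      rw [hb] at h2
      exact h1 (le_bot_iff.mp h2)
    · intro col
      refine ih (π col) _ π σ ?_
      intro i j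
      exact key_le G pos π σ hdom S' col i j

lemma remover_transport {Γ : ℕ} :
    ∀ (fuel : ℕ) (G G' : Fin N → Fin K → WithBot ℕ)
      (π : Equiv.Perm (Fin N)) (σ : Fin N → Equiv.Perm (Fin K)),
      (∀ i j, G' (π i) j ≤ G i (σ i j)) →
      RemoverWinsIn Γ fuel G → RemoverWinsIn Γ fuel G' := by
  intro fuel
  induction fuel with
  | zero =>
    intro G G' π σ hdom hR i j
    have := hdom (π.symm i) j
    simp only [Equiv.apply_symm_apply] at this
    rw [hR] at this
    exact le_bot_iff.mp this
  | succ fuel ih =>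
    intro G G' π σ hdom hR
    obtain ⟨hno, hstep⟩ := hR
    constructor
    · intro i j hle
      have h2 := hdom (π.symm i) j
      simp only [Equiv.apply_symm_apply] at h2
      exact hno _ _ (le_trans hle h2)
    · intro S' hne' hon'
      have hneS : (transpS π σ S').Nonempty := by
        obtain ⟨⟨a, b⟩, hab⟩ := hne'
        exact ⟨_, Finset.mem_image_of_mem _ hab⟩
      have honS : ∀ c ∈ transpS π σ S', G c.1 c.2 ≠ ⊥ := by
        rintro ⟨i, m⟩ hm
        have : (i, (σ i) ((σ i).symm m)) ∈ transpS π σ S' := by simpa using hm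
        rw [mem_transpS] at this
        have h1 := hon' _ this
        have h2 := hdom i ((σ i).symm m)
        simp only [Equiv.apply_symm_apply] at h2
        intro hb
        rw [hb] at h2
        exact h1 (le_bot_iff.mp h2)
      obtain ⟨col, hcol⟩ := hstep (transpS π σ S') hneS honS
      refine ⟨π col, ?_⟩
      have hdom' : ∀ i j, pushChips G' S' (π col) (π i) j ≤
          pushChips G (transpS π σ S') col i (σ i j) :=
        key_le G G' π σ hdom S' col
      rcases hcol with hall | hrec
      · left
        intro i j
        have := hdom' (π.symm i) j
        simp only [Equiv.apply_symm_apply] at this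
        rw [hall] at this
        exact le_bot_iff.mp this
      · right
        exact ih _ _ π σ hdom' hrec

end Transport

/-- Let `G` and `G'` be Pusher-to-move game states of the chip game with `N`
columns, `K` chips per column, and winning threshold `Γ`. If `G ≥ G'`, then: if Pusher has a
winning strategy from `G'`, then Pusher has a winning strategy from `G`; and if `G` is a losing
state for Pusher (Remover has a winning strategy from `G`), then so is `G'`. -/
theorem pusherWins_of_boardGE (N K Γ : ℕ) (G G' : Fin N → Fin K → WithBot ℕ)
    (h : BoardGE G G') :
    (PusherWins Γ G' → PusherWins Γ G) ∧ (RemoverWins Γ G → RemoverWins Γ G') := by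
  obtain ⟨π, hπ⟩ := h
  choose σ hσ using hπ
  constructor
  · intro hw
    exact pusher_transport hw G π σ hσ
  · rintro ⟨fuel, hR⟩
    exact ⟨fuel, remover_transport fuel G G' π σ hσ hR⟩
end

section
/- Suppose a Pusher-to-move game state G = ({C_1, C_2, C_3, ..., C_N}, Γ, Pusher) of a chip game has two identical columns C_1 = C_2. Let σ_p and σ_p' be two Pusher moves such that applying σ_p to G yields the board {C_1', C_2', C_3', ..., C_N'} and applying σ_p' to G yields the board {C_1', C_1', C_3', ..., C_N'} (the two resulting boards differ only in the second column). If C_1' ≥ C_2', then σ_p is worse than σ_p': if Pusher has a winning strategy from the state σ_p(G), then Pusher has a winning strategy from the state σ_p'(G). -/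
lemma mapSucc_mono_s3 {a b : WithBot ℕ} (h : a ≤ b) :
    a.map (· + 1) ≤ b.map (· + 1) := by
  induction a using WithBot.recBotCoe with
  | bot => simp
  | coe n =>
    induction b using WithBot.recBotCoe with
    | bot => simp at h
    | coe m =>
      rw [WithBot.map_coe, WithBot.map_coe, WithBot.coe_le_coe]
      exact Nat.add_le_add_right (WithBot.coe_le_coe.mp h) 1

lemma ite_push_inj {x : WithBot ℕ} {p q : Prop} [Decidable p] [Decidable q]
    (h : (if p then x.map (· + 1) else x) = (if q then x.map (· + 1) else x))
    (hx : x ≠ ⊥) : p ↔ q := by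
  obtain ⟨n, rfl⟩ := WithBot.ne_bot_iff_exists.mp hx
  constructor
  · intro hp; by_contra hq
    rw [if_pos hp, if_neg hq, WithBot.map_coe, WithBot.coe_inj] at h
    exact absurd h (Nat.succ_ne_self n)
  · intro hq; by_contra hp
    rw [if_neg hp, if_pos hq, WithBot.map_coe, WithBot.coe_inj] at h
    exact absurd h.symm (Nat.succ_ne_self n)

lemma ite_bot_congr {p q : Prop} [Decidable p] [Decidable q] {x y : WithBot ℕ}
    (hxy : x = y) (h : x ≠ ⊥ → (p ↔ q)) :
    (if p then (⊥ : WithBot ℕ) else x) = if q then ⊥ else y := by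
  subst hxy
  by_cases hx : x = ⊥
  · subst hx; simp
  · exact if_congr (h hx) rfl rfl


lemma removeCol_ne {N K : ℕ} (pos : Fin N → Fin K → WithBot ℕ) (T : Finset (Fin N × Fin K))
    (c i : Fin N) (hne : i ≠ c) (j : Fin K) : removeCol pos T c i j = pos i j := by
  simp [removeCol, hne]

lemma pushOnly_ne_bot {N K : ℕ} (pos : Fin N → Fin K → WithBot ℕ)
    (T : Finset (Fin N × Fin K)) (i : Fin N) (j : Fin K)
    (h : pushOnly pos T i j ≠ ⊥) : pos i j ≠ ⊥ := by
  intro hb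
  simp [pushOnly, hb] at h

lemma pusherWins_mono {k N K : ℕ} {B B' : Fin N → Fin K → WithBot ℕ}
    (hge : BoardGE B B') (hw : PusherWins k B') : PusherWins k B := by
  induction hw generalizing B with
  | win pos i j hle =>
    obtain ⟨π, hπ⟩ := hge
    obtain ⟨σ, hσ⟩ := hπ (π.symm i)
    refine PusherWins.win _ (π.symm i) (σ j) (le_trans hle ?_)
    have := hσ j
    simpa using this
  | step pos T' hne hon h ih =>
    obtain ⟨π, hπ⟩ := hge
    choose σ hσ using hπ
    set T : Finset (Fin N × Fin K) :=
      Finset.univ.filter (fun c => (π c.1, (σ c.1).symm c.2) ∈ T') with hT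
    have hmem : ∀ i j, (i, j) ∈ T ↔ (π i, (σ i).symm j) ∈ T' := by
      intro i j; simp [hT]
    refine PusherWins.step _ T ?_ ?_ ?_
    · obtain ⟨⟨i, j⟩, hij⟩ := hne
      refine ⟨(π.symm i, σ (π.symm i) j), ?_⟩
      rw [hmem]
      simpa using hij
    · rintro ⟨i, j⟩ hc
      have h1 := hon _ ((hmem i j).1 hc)
      have h2 := hσ i ((σ i).symm j)
      simp only [Equiv.apply_symm_apply] at h2
      intro hb
      rw [hb] at h2
      exact h1 (le_bot_iff.mp h2)
    · intro col
      apply ih (π col)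
      refine ⟨π, fun i => ⟨σ i, fun j => ?_⟩⟩
      have hm : ((i, σ i j) ∈ T) ↔ ((π i, j) ∈ T') := by
        rw [hmem]; simp
      have hcc : (i = col) ↔ (π i = π col) := by
        constructor
        · rintro rfl; rfl
        · intro hh; exact π.injective hh
      have hle := hσ i j
      simp only [pushChips, removeCol, pushOnly, hm, ← hcc]
      by_cases h2 : i = col
      · subst h2
        by_cases h1 : (π i, j) ∈ T' <;> simp [h1, hle]
      · by_cases h1 : (π i, j) ∈ T' <;>
          simp [h1, h2, mapSucc_mono_s3 hle, hle]


/-- Suppose a Pusher-to-move state `B` of the chip game (with `N ≥ 2` columns,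
`K` chips per column, winning threshold `Γ`) has two identical columns `C_1 = C_2` (columns `0`
and `1`). Let `S` and `S'` be two Pusher moves (nonempty sets of chips on the board) such that
pushing `S` yields the board with columns `C_1', C_2', C_3', …, C_N'` and pushing `S'` yields
the board `C_1', C_1', C_3', …, C_N'` (the two resulting boards differ only in the second
column). If `C_1' ≥ C_2'`, then `S` is worse than `S'`: if Pusher has a winning strategy from
the mid-round state reached by `S` (i.e. against every Remover response), then Pusher has a
winning strategy from the mid-round state reached by `S'`. -/
theorem worse_move_of_identical_columns (N K Γ : ℕ) (hN : 2 ≤ N)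
    (B : Fin N → Fin K → WithBot ℕ)
    (hcols : B ⟨0, by omega⟩ = B ⟨1, by omega⟩)
    (S S' : Finset (Fin N × Fin K))
    (hS : S.Nonempty) (hS' : S'.Nonempty)
    (hSon : ∀ c ∈ S, B c.1 c.2 ≠ ⊥) (hS'on : ∀ c ∈ S', B c.1 c.2 ≠ ⊥)
    (h0 : pushOnly B S' ⟨0, by omega⟩ = pushOnly B S ⟨0, by omega⟩)
    (h1 : pushOnly B S' ⟨1, by omega⟩ = pushOnly B S ⟨0, by omega⟩)
    (hrest : ∀ i : Fin N, i ≠ ⟨0, by omega⟩ → i ≠ ⟨1, by omega⟩ →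
      pushOnly B S' i = pushOnly B S i)
    (hge : ColGE (pushOnly B S ⟨0, by omega⟩) (pushOnly B S ⟨1, by omega⟩)) :
    (∀ col : Fin N, PusherWins Γ (removeCol (pushOnly B S) S col)) →
      ∀ col : Fin N, PusherWins Γ (removeCol (pushOnly B S') S' col) := by
  intro hw col
  have hc01 : (⟨0, by omega⟩ : Fin N) ≠ (⟨1, by omega⟩ : Fin N) := by
    simp [Fin.ext_iff]
  obtain ⟨σg, hgeσ⟩ := hge
  -- column facts
  have F0 : ∀ j, (if ((⟨0, by omega⟩ : Fin N), j) ∈ S' then (⊥ : WithBot ℕ)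
        else pushOnly B S' ⟨0, by omega⟩ j)
      = (if ((⟨0, by omega⟩ : Fin N), j) ∈ S then ⊥ else pushOnly B S ⟨0, by omega⟩ j) := by
    intro j
    refine ite_bot_congr (congrFun h0 j) fun hx => ?_
    exact ite_push_inj (congrFun h0 j) (pushOnly_ne_bot B S' _ _ hx)
  have F1 : ∀ j, (if ((⟨1, by omega⟩ : Fin N), j) ∈ S' then (⊥ : WithBot ℕ)
        else pushOnly B S' ⟨1, by omega⟩ j)
      = (if ((⟨0, by omega⟩ : Fin N), j) ∈ S then ⊥ else pushOnly B S ⟨0, by omega⟩ j) := by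
    intro j
    refine ite_bot_congr (congrFun h1 j) fun hx => ?_
    have h := congrFun h1 j
    simp only [pushOnly] at h
    rw [← congrFun hcols j] at h
    exact ite_push_inj h (by rw [congrFun hcols j]; exact pushOnly_ne_bot B S' _ _ hx)
  have Fi : ∀ i : Fin N, i ≠ ⟨0, by omega⟩ → i ≠ ⟨1, by omega⟩ → ∀ j,
      (if (i, j) ∈ S' then (⊥ : WithBot ℕ) else pushOnly B S' i j)
      = (if (i, j) ∈ S then ⊥ else pushOnly B S i j) := by
    intro i hi0 hi1 j
    refine ite_bot_congr (congrFun (hrest i hi0 hi1) j) fun hx => ?_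
    exact ite_push_inj (congrFun (hrest i hi0 hi1) j) (pushOnly_ne_bot B S' _ _ hx)
  by_cases hcol0 : col = (⟨0, by omega⟩ : Fin N)
  · subst hcol0
    refine pusherWins_mono ⟨Equiv.refl _, fun i => ?_⟩ (hw ⟨0, by omega⟩)
    simp only [Equiv.refl_apply]
    by_cases hi0 : i = (⟨0, by omega⟩ : Fin N)
    · subst hi0
      refine ⟨Equiv.refl _, fun j => le_of_eq ?_⟩
      simp only [Equiv.refl_apply, removeCol, true_and]
      exact (F0 j).symm
    · by_cases hi1 : i = (⟨1, by omega⟩ : Fin N)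
      · subst hi1
        refine ⟨σg, fun j => ?_⟩
        rw [removeCol_ne _ _ _ _ hc01.symm j, removeCol_ne _ _ _ _ hc01.symm (σg j),
          congrFun h1 (σg j)]
        exact hgeσ j
      · refine ⟨Equiv.refl _, fun j => le_of_eq ?_⟩
        simp only [Equiv.refl_apply]
        rw [removeCol_ne _ _ _ _ hi0 j, removeCol_ne _ _ _ _ hi0 j,
          congrFun (hrest i hi0 hi1) j]
  · by_cases hcol1 : col = (⟨1, by omega⟩ : Fin N)
    · subst hcol1
      refine pusherWins_mono ⟨Equiv.swap ⟨0, by omega⟩ ⟨1, by omega⟩, fun i => ?_⟩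
        (hw ⟨0, by omega⟩)
      by_cases hi0 : i = (⟨0, by omega⟩ : Fin N)
      · subst hi0
        rw [Equiv.swap_apply_left]
        refine ⟨σg, fun j => ?_⟩
        rw [removeCol_ne _ _ _ _ hc01.symm j, removeCol_ne _ _ _ _ hc01 (σg j),
          congrFun h0 (σg j)]
        exact hgeσ j
      · by_cases hi1 : i = (⟨1, by omega⟩ : Fin N)
        · subst hi1
          rw [Equiv.swap_apply_right]
          refine ⟨Equiv.refl _, fun j => le_of_eq ?_⟩
          simp only [Equiv.refl_apply, removeCol, true_and]
          exact (F1 j).symm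
        · rw [Equiv.swap_apply_of_ne_of_ne hi0 hi1]
          refine ⟨Equiv.refl _, fun j => le_of_eq ?_⟩
          simp only [Equiv.refl_apply]
          rw [removeCol_ne _ _ _ _ hi1 j, removeCol_ne _ _ _ _ hi0 j,
            congrFun (hrest i hi0 hi1) j]
    · refine pusherWins_mono ⟨Equiv.refl _, fun i => ?_⟩ (hw col)
      simp only [Equiv.refl_apply]
      by_cases hi0 : i = (⟨0, by omega⟩ : Fin N)
      · subst hi0
        refine ⟨Equiv.refl _, fun j => le_of_eq ?_⟩
        simp only [Equiv.refl_apply]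
        rw [removeCol_ne _ _ _ _ (fun h => hcol0 h.symm) j,
          removeCol_ne _ _ _ _ (fun h => hcol0 h.symm) j,
          congrFun h0 j]
      · by_cases hi1 : i = (⟨1, by omega⟩ : Fin N)
        · subst hi1
          refine ⟨σg, fun j => ?_⟩
          rw [removeCol_ne _ _ _ _ (fun h => hcol1 h.symm) j,
            removeCol_ne _ _ _ _ (fun h => hcol1 h.symm) (σg j),
            congrFun h1 (σg j)]
          exact hgeσ j
        · by_cases hic : i = col
          · subst hic
            refine ⟨Equiv.refl _, fun j => le_of_eq ?_⟩
            simp only [Equiv.refl_apply, removeCol, true_and]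
            exact (Fi i hi0 hi1 j).symm
          · refine ⟨Equiv.refl _, fun j => le_of_eq ?_⟩
            simp only [Equiv.refl_apply]
            rw [removeCol_ne _ _ _ _ hic j, removeCol_ne _ _ _ _ hic j,
              congrFun (hrest i hi0 hi1) j]
end

section
/- For all positive integers k, n, r: if Pusher has a winning strategy in the (k, n⋆r) chip game, then Pusher has a winning strategy in the symmetric (k, rn⋆r) chip game. -/
/-- The board at the end of a round of the symmetric chip game in which Pusher chooses the label
set `T` (pushing, in every column, those chips still on the board whose label lies in `T`) and
Remover removes the pushed chips of column `col`. `⊥` represents a removed chip. -/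
def symPush {r n : ℕ} (pos : Fin r → Fin n → WithBot ℕ) (T : Finset (Fin n)) (col : Fin r) :
    Fin r → Fin n → WithBot ℕ :=
  fun i j => if j ∈ T then (if i = col then ⊥ else (pos i j).map (· + 1)) else pos i j

/-- `SymPusherWins k pos` : from the Pusher-to-move board `pos`, Pusher has a winning strategy
in the symmetric chip game with winning threshold `k`: by repeatedly choosing a label set `T`
(which must push at least one chip), Pusher can force that at the end of some round a chip
occupies row `k` (or above). -/
inductive SymPusherWins (k : ℕ) {r n : ℕ} : (Fin r → Fin n → WithBot ℕ) → Prop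
  | win (pos : Fin r → Fin n → WithBot ℕ) (i : Fin r) (j : Fin n)
      (h : (k : WithBot ℕ) ≤ pos i j) : SymPusherWins k pos
  | step (pos : Fin r → Fin n → WithBot ℕ) (T : Finset (Fin n))
      (hne : ∃ i, ∃ j ∈ T, pos i j ≠ ⊥)
      (h : ∀ col : Fin r, SymPusherWins k (symPush pos T col)) : SymPusherWins k pos


private lemma sym_key (k n r : ℕ) (p : Fin r → Fin n → WithBot ℕ)
    (hp : PusherWins k p) :
    ∀ q : Fin r → Fin (r * n) → WithBot ℕ,
      (∀ (i : Fin r) (j : Fin n), q i (finProdFinEquiv (i, j)) = p i j) →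
      SymPusherWins k q := by
  induction hp with
  | win p i j h =>
    intro q hq
    exact SymPusherWins.win q i (finProdFinEquiv (i, j)) (by rw [hq]; exact h)
  | step p S hne hon h ih =>
    intro q hq
    refine SymPusherWins.step q (S.map finProdFinEquiv.toEmbedding) ?_ ?_
    · obtain ⟨c, hc⟩ := hne
      refine ⟨c.1, finProdFinEquiv (c.1, c.2), Finset.mem_map' _ |>.2 hc, ?_⟩
      rw [hq]
      exact hon c hc
    · intro col
      refine ih col _ ?_
      intro i j
      have hmem : finProdFinEquiv (i, j) ∈ S.map finProdFinEquiv.toEmbedding ↔ (i, j) ∈ S :=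
        Finset.mem_map' _
      show symPush q _ col i (finProdFinEquiv (i, j)) = pushChips p S col i j
      simp only [symPush, pushChips, removeCol, pushOnly, hmem]
      by_cases hS : (i, j) ∈ S
      · by_cases hcol : i = col <;> simp_all
      · simp [hS, hq]

/-- For all positive integers `k`, `n`, `r`: if Pusher has a winning strategy
in the `(k, n⋆r)` chip game, then Pusher has a winning strategy in the symmetric `(k, rn⋆r)`
chip game (both started with all chips in row `0`). -/
theorem symPusherWins_of_pusherWins (k n r : ℕ) (hk : 0 < k) (hn : 0 < n) (hr : 0 < r) :
    PusherWins k (fun (_ : Fin r) (_ : Fin n) => (0 : WithBot ℕ)) →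
      SymPusherWins k (fun (_ : Fin r) (_ : Fin (r * n)) => (0 : WithBot ℕ)) := by
  intro hp
  exact sym_key k n r _ hp _ (fun i j => rfl)
end
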